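/- Let 𝒳 be a metric space with a fixed base point o, and write ‖x‖ := d(x,o). Let 0 < β ≤ 2. Then there exists a constant C, depending only on β, such that for any four points x₁, x₂, x₃, x₄ ∈ 𝒳 (indices interpreted modulo 4), |d(x₁,x₂)^β − d(x₂,x₃)^β + d(x₃,x₄)^β − d(x₄,x₁)^β| ≤ C · Σ_{i=1}^{4} ‖x_i‖^{β/2} ‖x_{i+1}‖^{β/2}. -/
import Mathlib

private lemma rpow_subadd {x y p : ℝ} (hx : 0 ≤ x) (hy : 0 ≤ y) (hp : 0 ≤ p) (hp1 : p ≤ 1) :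
    (x + y) ^ p ≤ x ^ p + y ^ p := by
  lift x to NNReal using hx
  lift y to NNReal using hy
  exact_mod_cast NNReal.rpow_add_le_add_rpow x y hp hp1

private lemma rpow_sq {d p : ℝ} (hd : 0 ≤ d) : d ^ (2 * p) = (d ^ 2) ^ p := by
  rw [Real.rpow_mul hd, Real.rpow_two]

/-- lower bound, assuming `a ≤ b` -/
private lemma key_lower {p a b d : ℝ} (hp : 0 < p) (hp1 : p ≤ 1) (ha : 0 ≤ a)
    (hab : a ≤ b) (h1 : b - a ≤ d) (hd : 0 ≤ d) :
    a ^ (2 * p) + b ^ (2 * p) - d ^ (2 * p) ≤ 3 * (a ^ p * b ^ p) := by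
  have hb : 0 ≤ b := ha.trans hab
  have h1' : a ^ (2 * p) ≤ a ^ p * b ^ p := by
    rw [rpow_sq ha, sq, Real.mul_rpow ha ha]
    exact mul_le_mul_of_nonneg_left (Real.rpow_le_rpow ha hab hp.le) (Real.rpow_nonneg ha p)
  have h2' : b ^ (2 * p) ≤ d ^ (2 * p) + 2 * (a ^ p * b ^ p) := by
    have hsq : b ^ 2 ≤ (b - a) ^ 2 + 2 * a * b := by nlinarith
    calc b ^ (2 * p) = (b ^ 2) ^ p := rpow_sq hb
      _ ≤ ((b - a) ^ 2 + 2 * a * b) ^ p :=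
          Real.rpow_le_rpow (sq_nonneg b) hsq hp.le
      _ ≤ ((b - a) ^ 2) ^ p + (2 * a * b) ^ p := by
          refine rpow_subadd (sq_nonneg _) (by positivity) hp.le hp1
      _ ≤ d ^ (2 * p) + 2 * (a ^ p * b ^ p) := by
          have e1 : ((b - a) ^ 2) ^ p ≤ d ^ (2 * p) := by
            rw [rpow_sq hd]
            exact Real.rpow_le_rpow (sq_nonneg _) (by nlinarith) hp.le
          have e2 : (2 * a * b) ^ p ≤ 2 * (a ^ p * b ^ p) := by
            rw [mul_assoc, Real.mul_rpow (by norm_num) (by positivity),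
              Real.mul_rpow ha hb]
            have : (2 : ℝ) ^ p ≤ 2 := by
              calc (2 : ℝ) ^ p ≤ 2 ^ (1 : ℝ) :=
                Real.rpow_le_rpow_of_exponent_le (by norm_num) hp1
              _ = 2 := Real.rpow_one 2
            exact mul_le_mul_of_nonneg_right this (by positivity)
          linarith
  linarith

private lemma key {p a b d : ℝ} (hp : 0 < p) (hp1 : p ≤ 1) (ha : 0 ≤ a) (hb : 0 ≤ b)
    (h1 : |a - b| ≤ d) (h2 : d ≤ a + b) :
    |d ^ (2 * p) - a ^ (2 * p) - b ^ (2 * p)| ≤ 3 * (a ^ p * b ^ p) := by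
  have hd : 0 ≤ d := (abs_nonneg _).trans h1
  rw [abs_le]
  constructor
  · -- a^2p + b^2p - d^2p ≤ 3 a^p b^p
    rcases le_total a b with hab | hab
    · have := key_lower hp hp1 ha hab (by cases abs_le.mp h1; linarith [le_abs_self (a-b), neg_abs_le (a-b)]) hd
      linarith
    · have := key_lower hp hp1 hb hab (by cases abs_le.mp h1; linarith [le_abs_self (a-b)]) hd
      have hcomm : b ^ p * a ^ p = a ^ p * b ^ p := mul_comm _ _
      linarith [hcomm ▸ this]
  · -- d^2p ≤ a^2p + b^2p + 2 a^p b^p ≤ ... + 3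
    have hub : d ^ (2 * p) ≤ a ^ (2 * p) + b ^ (2 * p) + 2 * (a ^ p * b ^ p) := by
      calc d ^ (2 * p) = (d ^ 2) ^ p := rpow_sq hd
        _ ≤ (a ^ 2 + (b ^ 2 + 2 * a * b)) ^ p :=
            Real.rpow_le_rpow (sq_nonneg d) (by nlinarith) hp.le
        _ ≤ (a ^ 2) ^ p + (b ^ 2 + 2 * a * b) ^ p :=
            rpow_subadd (sq_nonneg _) (by positivity) hp.le hp1
        _ ≤ (a ^ 2) ^ p + ((b ^ 2) ^ p + (2 * a * b) ^ p) := by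
            gcongr
            exact rpow_subadd (sq_nonneg _) (by positivity) hp.le hp1
        _ ≤ a ^ (2 * p) + b ^ (2 * p) + 2 * (a ^ p * b ^ p) := by
            rw [rpow_sq ha, rpow_sq hb]
            have e2 : (2 * a * b) ^ p ≤ 2 * (a ^ p * b ^ p) := by
              rw [mul_assoc, Real.mul_rpow (by norm_num) (by positivity),
                Real.mul_rpow ha hb]
              have : (2 : ℝ) ^ p ≤ 2 := by
                calc (2 : ℝ) ^ p ≤ 2 ^ (1 : ℝ) :=
                  Real.rpow_le_rpow_of_exponent_le (by norm_num) hp1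
                _ = 2 := Real.rpow_one 2
              exact mul_le_mul_of_nonneg_right this (by positivity)
            linarith
    have hpos : 0 ≤ a ^ p * b ^ p := by positivity
    linarith

theorem stmt1.{u} (β : ℝ) (hβ0 : 0 < β) (hβ2 : β ≤ 2) :
    ∃ C : ℝ, ∀ (𝒳 : Type u) [MetricSpace 𝒳] (o x₁ x₂ x₃ x₄ : 𝒳),
      |dist x₁ x₂ ^ β - dist x₂ x₃ ^ β + dist x₃ x₄ ^ β - dist x₄ x₁ ^ β| ≤
        C * (dist x₁ o ^ (β / 2) * dist x₂ o ^ (β / 2)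
          + dist x₂ o ^ (β / 2) * dist x₃ o ^ (β / 2)
          + dist x₃ o ^ (β / 2) * dist x₄ o ^ (β / 2)
          + dist x₄ o ^ (β / 2) * dist x₁ o ^ (β / 2)) := by
  refine ⟨3, fun 𝒳 _ o x₁ x₂ x₃ x₄ => ?_⟩
  set p := β / 2 with hpdef
  have hp : 0 < p := by positivity
  have hp1 : p ≤ 1 := by simp [hpdef]; linarith
  have hβ : β = 2 * p := by rw [hpdef]; ring
  have tri : ∀ x y : 𝒳, |dist x o - dist y o| ≤ dist x y ∧ dist x y ≤ dist x o + dist y o := by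
    intro x y
    constructor
    · rw [abs_le]
      constructor
      · linarith [dist_triangle y x o, dist_comm x y ▸ (dist_triangle y x o)]
      · linarith [dist_triangle x y o]
    · calc dist x y ≤ dist x o + dist o y := dist_triangle x o y
        _ = dist x o + dist y o := by rw [dist_comm o y]
  have k12 := key hp hp1 dist_nonneg dist_nonneg (tri x₁ x₂).1 (tri x₁ x₂).2
  have k23 := key hp hp1 dist_nonneg dist_nonneg (tri x₂ x₃).1 (tri x₂ x₃).2
  have k34 := key hp hp1 dist_nonneg dist_nonneg (tri x₃ x₄).1 (tri x₃ x₄).2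
  have k41 := key hp hp1 dist_nonneg dist_nonneg (tri x₄ x₁).1 (tri x₄ x₁).2
  rw [hβ]
  set a1 := dist x₁ o
  set a2 := dist x₂ o
  set a3 := dist x₃ o
  set a4 := dist x₄ o
  have expand :
      dist x₁ x₂ ^ (2*p) - dist x₂ x₃ ^ (2*p) + dist x₃ x₄ ^ (2*p) - dist x₄ x₁ ^ (2*p)
      = (dist x₁ x₂ ^ (2*p) - a1 ^ (2*p) - a2 ^ (2*p))
        - (dist x₂ x₃ ^ (2*p) - a2 ^ (2*p) - a3 ^ (2*p))
        + (dist x₃ x₄ ^ (2*p) - a3 ^ (2*p) - a4 ^ (2*p))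
        - (dist x₄ x₁ ^ (2*p) - a4 ^ (2*p) - a1 ^ (2*p)) := by ring
  rw [expand]
  calc |(dist x₁ x₂ ^ (2*p) - a1 ^ (2*p) - a2 ^ (2*p))
        - (dist x₂ x₃ ^ (2*p) - a2 ^ (2*p) - a3 ^ (2*p))
        + (dist x₃ x₄ ^ (2*p) - a3 ^ (2*p) - a4 ^ (2*p))
        - (dist x₄ x₁ ^ (2*p) - a4 ^ (2*p) - a1 ^ (2*p))|
      ≤ |dist x₁ x₂ ^ (2*p) - a1 ^ (2*p) - a2 ^ (2*p)|
        + |dist x₂ x₃ ^ (2*p) - a2 ^ (2*p) - a3 ^ (2*p)|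
        + |dist x₃ x₄ ^ (2*p) - a3 ^ (2*p) - a4 ^ (2*p)|
        + |dist x₄ x₁ ^ (2*p) - a4 ^ (2*p) - a1 ^ (2*p)| := by
        calc _ ≤ |(dist x₁ x₂ ^ (2*p) - a1 ^ (2*p) - a2 ^ (2*p))
            - (dist x₂ x₃ ^ (2*p) - a2 ^ (2*p) - a3 ^ (2*p))
            + (dist x₃ x₄ ^ (2*p) - a3 ^ (2*p) - a4 ^ (2*p))|
            + |dist x₄ x₁ ^ (2*p) - a4 ^ (2*p) - a1 ^ (2*p)| := abs_sub _ _
          _ ≤ _ := by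
            gcongr ?_ + _
            calc _ ≤ |(dist x₁ x₂ ^ (2*p) - a1 ^ (2*p) - a2 ^ (2*p))
                - (dist x₂ x₃ ^ (2*p) - a2 ^ (2*p) - a3 ^ (2*p))|
                + |dist x₃ x₄ ^ (2*p) - a3 ^ (2*p) - a4 ^ (2*p)| := abs_add_le _ _
              _ ≤ _ := by gcongr ?_ + _; exact abs_sub _ _
    _ ≤ 3 * (a1 ^ p * a2 ^ p) + 3 * (a2 ^ p * a3 ^ p) + 3 * (a3 ^ p * a4 ^ p)
        + 3 * (a4 ^ p * a1 ^ p) := by gcongr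
    _ = 3 * (a1 ^ p * a2 ^ p + a2 ^ p * a3 ^ p + a3 ^ p * a4 ^ p + a4 ^ p * a1 ^ p) := by ring
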